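/- arXiv:2502.00744 — 6 statements merged into one kernel-verified Lean document; each statement's English description precedes it below -/
import Mathlib

section
/- The total connectivity φ^tot(W), defined as the sum over input nodes i ∈ V_1 and output nodes m ∈ V_K of the sum over all input-to-output paths γ of the product Π_k θ(W)_{γ_k} of normalized weights along the path, satisfies 0 ≤ φ^tot(W) ≤ 1. -/
open Finset

/-- Contiguity of an edge sequence: consecutive edges share endpoints. -/
def Contig (K : ℕ) (γ : Fin (K-1) → ℕ × ℕ) : Prop :=
  ∀ k : Fin (K-1), ∀ h : k.val + 1 < K - 1, (γ k).2 = (γ ⟨k.val + 1, h⟩).1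

instance (K : ℕ) (γ : Fin (K-1) → ℕ × ℕ) : Decidable (Contig K γ) := by
  unfold Contig; infer_instance

/-- Total connectivity: sum over all contiguous input-to-output edge sequences of
the product of edge weights. -/
noncomputable def phiTot (K : ℕ) (E : ℕ → Finset (ℕ × ℕ)) (θ : ℕ → ℕ → ℕ → ℝ) : ℝ :=
  ∑ γ ∈ (Fintype.piFinset (fun k : Fin (K-1) => E k.val)).filter (fun γ => Contig K γ),
    ∏ k : Fin (K-1), θ k.val (γ k).1 (γ k).2

/-- Total absolute weight of layer k. -/
noncomputable def Snorm (E : ℕ → Finset (ℕ × ℕ)) (W : ℕ → ℕ → ℕ → ℝ) (k : ℕ) : ℝ :=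
  ∑ e ∈ E k, |W k e.1 e.2|

/-- Per-layer normalized weights. -/
noncomputable def thetaNorm (E : ℕ → Finset (ℕ × ℕ)) (W : ℕ → ℕ → ℕ → ℝ)
    (k i j : ℕ) : ℝ :=
  |W k i j| / Snorm E W k

/-- Connectivity from the input layer to node `r` in layer `l`. -/
noncomputable def aIn (E : ℕ → Finset (ℕ × ℕ)) (θ : ℕ → ℕ → ℕ → ℝ) (l r : ℕ) : ℝ :=
  ∑ γ ∈ (Fintype.piFinset (fun k : Fin l => E k.val)).filter
      (fun γ => (∀ k : Fin l, ∀ h : k.val + 1 < l, (γ k).2 = (γ ⟨k.val + 1, h⟩).1)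
        ∧ ∀ h : 0 < l, (γ ⟨l - 1, by omega⟩).2 = r),
    ∏ k : Fin l, θ k.val (γ k).1 (γ k).2

/-- Connectivity from node `r` in layer `l` to the output layer (layer K-1). -/
noncomputable def aOut (K : ℕ) (E : ℕ → Finset (ℕ × ℕ)) (θ : ℕ → ℕ → ℕ → ℝ)
    (l r : ℕ) : ℝ :=
  ∑ γ ∈ (Fintype.piFinset (fun k : Fin (K - 1 - l) => E (l + k.val))).filter
      (fun γ => (∀ k : Fin (K - 1 - l), ∀ h : k.val + 1 < K - 1 - l,
          (γ k).2 = (γ ⟨k.val + 1, h⟩).1)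
        ∧ ∀ h : 0 < K - 1 - l, (γ ⟨0, h⟩).1 = r),
    ∏ k : Fin (K - 1 - l), θ (l + k.val) (γ k).1 (γ k).2


/-! Forgetting contiguity only adds nonnegative terms, and the unconstrained sum over edge
sequences factorizes into the product over layers of the layer sums of `θ`, each of which
equals `1` after normalization. -/

lemma sum_piFinset_prod_le_one {ι α : Type*} [Fintype ι] [DecidableEq ι]
    (s : ι → Finset α) (f : ι → α → ℝ) (hf : ∀ i, ∀ a ∈ s i, 0 ≤ f i a)
    (hs : ∀ i, ∑ a ∈ s i, f i a ≤ 1) :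
    ∑ g ∈ Fintype.piFinset s, ∏ i, f i (g i) ≤ 1 := by
  rw [← prod_univ_sum]
  exact prod_le_one (fun i _ => sum_nonneg (hf i)) (fun i _ => hs i)

section phiTot

variable {K : ℕ} {E : ℕ → Finset (ℕ × ℕ)} {θ : ℕ → ℕ → ℕ → ℝ}

lemma phiTot_nonneg (hθ : ∀ k i j, 0 ≤ θ k i j) : 0 ≤ phiTot K E θ :=
  sum_nonneg fun _ _ => prod_nonneg fun _ _ => hθ _ _ _

lemma phiTot_le_one (hθ : ∀ k i j, 0 ≤ θ k i j)
    (hsum : ∀ k < K - 1, ∑ e ∈ E k, θ k e.1 e.2 ≤ 1) : phiTot K E θ ≤ 1 :=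
  calc phiTot K E θ
      ≤ ∑ γ ∈ Fintype.piFinset (fun k : Fin (K - 1) => E k.val),
          ∏ k : Fin (K - 1), θ k.val (γ k).1 (γ k).2 :=
        sum_le_sum_of_subset_of_nonneg (filter_subset _ _)
          fun _ _ _ => prod_nonneg fun _ _ => hθ _ _ _
    _ ≤ 1 := sum_piFinset_prod_le_one _ _ (fun _ _ _ => hθ _ _ _) fun k => hsum k k.isLt

end phiTot

section thetaNorm

variable {E : ℕ → Finset (ℕ × ℕ)} {W : ℕ → ℕ → ℕ → ℝ}

lemma Snorm_nonneg (k : ℕ) : 0 ≤ Snorm E W k :=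
  sum_nonneg fun _ _ => abs_nonneg _

lemma Snorm_pos {k : ℕ} (h : ∃ e ∈ E k, W k e.1 e.2 ≠ 0) : 0 < Snorm E W k := by
  obtain ⟨e, he, hne⟩ := h
  exact sum_pos' (fun _ _ => abs_nonneg _) ⟨e, he, abs_pos.mpr hne⟩

lemma thetaNorm_nonneg (k i j : ℕ) : 0 ≤ thetaNorm E W k i j :=
  div_nonneg (abs_nonneg _) (Snorm_nonneg k)

lemma sum_thetaNorm_eq_one {k : ℕ} (h : ∃ e ∈ E k, W k e.1 e.2 ≠ 0) :
    ∑ e ∈ E k, thetaNorm E W k e.1 e.2 = 1 := by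
  simp only [thetaNorm]
  rw [← sum_div]
  exact div_self (Snorm_pos h).ne'

end thetaNorm

/-- 0 ≤ φ^tot(W) ≤ 1. -/
theorem phiTot_mem_unit_interval
    (K : ℕ) (E : ℕ → Finset (ℕ × ℕ)) (W : ℕ → ℕ → ℕ → ℝ)
    (h : ∀ k, k < K - 1 → ∃ e ∈ E k, W k e.1 e.2 ≠ 0) :
    0 ≤ phiTot K E (thetaNorm E W) ∧ phiTot K E (thetaNorm E W) ≤ 1 :=
  ⟨phiTot_nonneg thetaNorm_nonneg,
    phiTot_le_one thetaNorm_nonneg fun k hk => (sum_thetaNorm_eq_one (h k hk)).le⟩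
end

section
/- Summing the synaptic saliencies over any single layer recovers the total connectivity: Σ_{(i,j)∈E_k} a_{·i} · θ_{i,j} · a_{j·} = φ^tot(θ), for every k = 1,...,K−1. -/
open Finset

/-!
Every input-output path crosses layer `k` in exactly one edge `e = (i, j)`. Cutting it there is a
bijection between the paths through `e` and the pairs (path from the input layer into `i`,
path from `j` to the output layer), and the weight of a path is the product of the weights of
its pieces. Hence the paths through `e` contribute exactly `a_{·i} θ_{ij} a_{j·}` to `φ^tot`, and
summing over the edges of layer `k` counts every path once.
-/

lemma List.isChain_append_cons {α : Type*} {R : α → α → Prop} {l₁ l₂ : List α} {x : α} :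
    (l₁ ++ x :: l₂).IsChain R ↔
      l₁.IsChain R ∧ (∀ a ∈ l₁.getLast?, R a x) ∧ (∀ b ∈ l₂.head?, R x b) ∧ l₂.IsChain R := by
  rw [List.isChain_append, List.isChain_cons]
  simp only [List.head?_cons, Option.mem_def, Option.some.injEq, forall_eq']
  tauto

namespace LayeredNetwork

variable {X : Type*}

def IsContiguous {n : ℕ} (γ : Fin n → ℕ × ℕ) : Prop :=
  ∀ i : Fin n, ∀ h : i.val + 1 < n, (γ i).2 = (γ ⟨i.val + 1, h⟩).1

instance {n : ℕ} (γ : Fin n → ℕ × ℕ) : Decidable (IsContiguous γ) := by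
  unfold IsContiguous; infer_instance

-- An empty path ends and starts at every node: the conventions `a_{·i} = 1` on `V_1` and
-- `a_{m·} = 1` on `V_K`.
def EndsAt {n : ℕ} (γ : Fin n → ℕ × ℕ) (r : ℕ) : Prop :=
  ∀ h : 0 < n, (γ ⟨n - 1, by omega⟩).2 = r

def StartsAt {n : ℕ} (γ : Fin n → ℕ × ℕ) (r : ℕ) : Prop :=
  ∀ h : 0 < n, (γ ⟨0, h⟩).1 = r

instance {n : ℕ} (γ : Fin n → ℕ × ℕ) (r : ℕ) : Decidable (EndsAt γ r) := by
  unfold EndsAt; infer_instance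

instance {n : ℕ} (γ : Fin n → ℕ × ℕ) (r : ℕ) : Decidable (StartsAt γ r) := by
  unfold StartsAt; infer_instance

lemma isContiguous_iff_isChain {n : ℕ} (γ : Fin n → ℕ × ℕ) :
    IsContiguous γ ↔ (List.ofFn γ).IsChain fun a b => a.2 = b.1 := by
  rw [List.isChain_ofFn, IsContiguous, Fin.forall_iff]
  exact ⟨fun h i hi => h i (by omega) hi, fun h i _ hi => h i hi⟩

lemma endsAt_iff {n : ℕ} (γ : Fin n → ℕ × ℕ) (r : ℕ) :
    EndsAt γ r ↔ ∀ a ∈ (List.ofFn γ).getLast?, a.2 = r := by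
  cases n with
  | zero => simp [EndsAt]
  | succ n => simp [EndsAt, List.getLast?_eq_getElem?, -List.ofFn_succ]

lemma startsAt_iff {n : ℕ} (γ : Fin n → ℕ × ℕ) (r : ℕ) :
    StartsAt γ r ↔ ∀ b ∈ (List.ofFn γ).head?, r = b.1 := by
  cases n with
  | zero => simp [StartsAt]
  | succ n => simp [StartsAt, List.ofFn_succ, eq_comm]

def paths (E : ℕ → Finset (ℕ × ℕ)) (s n : ℕ) : Finset (Fin n → ℕ × ℕ) :=
  {γ ∈ Fintype.piFinset fun i : Fin n => E (s + i.val) | IsContiguous γ}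

def pathWeight (θ : ℕ → ℕ → ℕ → ℝ) (s : ℕ) {n : ℕ} (γ : Fin n → ℕ × ℕ) : ℝ :=
  ∏ i : Fin n, θ (s + i.val) (γ i).1 (γ i).2

lemma phiTot_eq_sum_paths (K : ℕ) (E : ℕ → Finset (ℕ × ℕ)) (θ : ℕ → ℕ → ℕ → ℝ) :
    phiTot K E θ = ∑ γ ∈ paths E 0 (K - 1), pathWeight θ 0 γ := by
  simp only [phiTot, paths, pathWeight, zero_add]
  rfl

lemma aIn_eq_sum_paths (E : ℕ → Finset (ℕ × ℕ)) (θ : ℕ → ℕ → ℕ → ℝ) (l r : ℕ) :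
    aIn E θ l r = ∑ γ ∈ paths E 0 l with EndsAt γ r, pathWeight θ 0 γ := by
  simp only [aIn, paths, pathWeight, zero_add, Finset.filter_filter]
  rfl

lemma aOut_eq_sum_paths (K : ℕ) (E : ℕ → Finset (ℕ × ℕ)) (θ : ℕ → ℕ → ℕ → ℝ) (l r : ℕ) :
    aOut K E θ l r = ∑ γ ∈ paths E l (K - 1 - l) with StartsAt γ r, pathWeight θ l γ := by
  simp only [aOut, paths, pathWeight, Finset.filter_filter]
  rfl

def joinEquiv (k m : ℕ) : (Fin k → X) × X × (Fin m → X) ≃ (Fin (k + (m + 1)) → X) :=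
  ((Equiv.refl _).prodCongr (Fin.consEquiv fun _ => X)).trans (Fin.appendEquiv k (m + 1))

lemma joinEquiv_apply {k m : ℕ} (α : Fin k → X) (e : X) (β : Fin m → X) :
    joinEquiv k m (α, e, β) = Fin.append α (Fin.cons e β) := rfl

lemma joinEquiv_apply_mk {k m : ℕ} (α : Fin k → X) (e : X) (β : Fin m → X) :
    joinEquiv k m (α, e, β) ⟨k, by omega⟩ = e := by
  rw [joinEquiv_apply, show (⟨k, _⟩ : Fin (k + (m + 1))) = Fin.natAdd k 0 from rfl,
    Fin.append_right, Fin.cons_zero]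

lemma ofFn_joinEquiv {k m : ℕ} (α : Fin k → X) (e : X) (β : Fin m → X) :
    List.ofFn (joinEquiv k m (α, e, β)) = List.ofFn α ++ e :: List.ofFn β := by
  rw [joinEquiv_apply, List.ofFn_fin_append, List.ofFn_cons]

lemma isContiguous_joinEquiv {k m : ℕ} (α : Fin k → ℕ × ℕ) (e : ℕ × ℕ) (β : Fin m → ℕ × ℕ) :
    IsContiguous (joinEquiv k m (α, e, β)) ↔
      IsContiguous α ∧ EndsAt α e.1 ∧ StartsAt β e.2 ∧ IsContiguous β := by
  simp only [isContiguous_iff_isChain, endsAt_iff, startsAt_iff, ofFn_joinEquiv,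
    List.isChain_append_cons]

lemma mem_piFinset_joinEquiv (E : ℕ → Finset (ℕ × ℕ)) (s : ℕ) {k m : ℕ} (α : Fin k → ℕ × ℕ)
    (e : ℕ × ℕ) (β : Fin m → ℕ × ℕ) :
    joinEquiv k m (α, e, β) ∈ Fintype.piFinset (fun i : Fin (k + (m + 1)) => E (s + i.val)) ↔
      α ∈ Fintype.piFinset (fun i : Fin k => E (s + i.val)) ∧ e ∈ E (s + k) ∧
        β ∈ Fintype.piFinset (fun i : Fin m => E (s + k + 1 + i.val)) := by
  simp only [Fintype.mem_piFinset, Fin.forall_fin_add, Fin.forall_fin_succ, joinEquiv_apply,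
    Fin.append_left, Fin.append_right, Fin.cons_zero, Fin.cons_succ, Fin.val_castAdd,
    Fin.val_natAdd, Fin.val_zero, Fin.val_succ, add_zero]
  simp only [← add_assoc, add_right_comm _ _ 1]

lemma mem_paths_joinEquiv (E : ℕ → Finset (ℕ × ℕ)) (s : ℕ) {k m : ℕ} (α : Fin k → ℕ × ℕ)
    (e : ℕ × ℕ) (β : Fin m → ℕ × ℕ) :
    joinEquiv k m (α, e, β) ∈ paths E s (k + (m + 1)) ↔
      (α ∈ paths E s k ∧ EndsAt α e.1) ∧ e ∈ E (s + k) ∧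
        (β ∈ paths E (s + k + 1) m ∧ StartsAt β e.2) := by
  simp only [paths, Finset.mem_filter, mem_piFinset_joinEquiv, isContiguous_joinEquiv]
  tauto

lemma pathWeight_joinEquiv (θ : ℕ → ℕ → ℕ → ℝ) (s : ℕ) {k m : ℕ} (α : Fin k → ℕ × ℕ)
    (e : ℕ × ℕ) (β : Fin m → ℕ × ℕ) :
    pathWeight θ s (joinEquiv k m (α, e, β)) =
      pathWeight θ s α * θ (s + k) e.1 e.2 * pathWeight θ (s + k + 1) β := by
  simp only [pathWeight, Fin.prod_univ_add, Fin.prod_univ_succ, joinEquiv_apply,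
    Fin.append_left, Fin.append_right, Fin.cons_zero, Fin.cons_succ, Fin.val_castAdd,
    Fin.val_natAdd, Fin.val_zero, Fin.val_succ, add_zero]
  simp only [← add_assoc, add_right_comm _ _ 1, mul_assoc]

lemma sum_paths_through_edge (E : ℕ → Finset (ℕ × ℕ)) (θ : ℕ → ℕ → ℕ → ℝ) (s k m : ℕ)
    {e : ℕ × ℕ} (he : e ∈ E (s + k)) :
    ∑ γ ∈ paths E s (k + (m + 1)) with γ ⟨k, by omega⟩ = e, pathWeight θ s γ =
      (∑ α ∈ paths E s k with EndsAt α e.1, pathWeight θ s α) * θ (s + k) e.1 e.2 *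
        ∑ β ∈ paths E (s + k + 1) m with StartsAt β e.2, pathWeight θ (s + k + 1) β := by
  set A := {α ∈ paths E s k | EndsAt α e.1}
  set B := {β ∈ paths E (s + k + 1) m | StartsAt β e.2}
  have h_mem : ∀ x, x ∈ A ×ˢ {e} ×ˢ B ↔
      joinEquiv k m x ∈ {γ ∈ paths E s (k + (m + 1)) | γ ⟨k, by omega⟩ = e} := by
    rintro ⟨α, e', β⟩
    simp only [A, B, Finset.mem_product, Finset.mem_singleton, Finset.mem_filter,
      mem_paths_joinEquiv, joinEquiv_apply_mk]
    constructor
    · rintro ⟨hα, rfl, hβ⟩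
      exact ⟨⟨hα, he, hβ⟩, rfl⟩
    · rintro ⟨⟨hα, -, hβ⟩, rfl⟩
      exact ⟨hα, rfl, hβ⟩
  calc _ = ∑ x ∈ A ×ˢ {e} ×ˢ B, pathWeight θ s (joinEquiv k m x) :=
        (Finset.sum_equiv (joinEquiv k m) h_mem fun _ _ => rfl).symm
    _ = ∑ x ∈ A ×ˢ {e} ×ˢ B, pathWeight θ s x.1 * θ (s + k) x.2.1.1 x.2.1.2 *
          pathWeight θ (s + k + 1) x.2.2 :=
        Finset.sum_congr rfl fun x _ => pathWeight_joinEquiv θ s x.1 x.2.1 x.2.2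
    _ = _ := by
      simp only [Finset.sum_product, Finset.sum_singleton]
      rw [Finset.sum_mul, Finset.sum_mul_sum]

lemma sum_paths_eq_sum_layer (E : ℕ → Finset (ℕ × ℕ)) (θ : ℕ → ℕ → ℕ → ℝ) (s k m : ℕ) :
    ∑ γ ∈ paths E s (k + (m + 1)), pathWeight θ s γ =
      ∑ e ∈ E (s + k), (∑ α ∈ paths E s k with EndsAt α e.1, pathWeight θ s α) *
        θ (s + k) e.1 e.2 *
          ∑ β ∈ paths E (s + k + 1) m with StartsAt β e.2, pathWeight θ (s + k + 1) β := by
  have h_mem : ∀ γ ∈ paths E s (k + (m + 1)), γ ⟨k, by omega⟩ ∈ E (s + k) := fun γ hγ =>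
    Fintype.mem_piFinset.1 (Finset.mem_filter.1 hγ).1 ⟨k, by omega⟩
  rw [← Finset.sum_fiberwise_of_maps_to h_mem]
  exact Finset.sum_congr rfl fun e he => sum_paths_through_edge E θ s k m he

end LayeredNetwork

open LayeredNetwork

theorem saliency_sum_eq_phiTot_general
    (K : ℕ) (E : ℕ → Finset (ℕ × ℕ)) (θ : ℕ → ℕ → ℕ → ℝ)
    (k : ℕ) (hk : k < K - 1) :
    ∑ e ∈ E k, aIn E θ k e.1 * θ k e.1 e.2 * aOut K E θ (k+1) e.2
      = phiTot K E θ := by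
  obtain ⟨m, hm⟩ : ∃ m, K - 1 = k + (m + 1) := ⟨K - 1 - (k + 1), by omega⟩
  have hm' : K - 1 - (k + 1) = m := by omega
  simp only [aIn_eq_sum_paths, aOut_eq_sum_paths, phiTot_eq_sum_paths]
  rw [hm', hm, sum_paths_eq_sum_layer]
  simp only [zero_add]

/-- summing the synaptic saliencies over any single layer recovers
the total connectivity. -/
theorem saliency_sum_eq_phiTot
    (K : ℕ) (E : ℕ → Finset (ℕ × ℕ)) (θ : ℕ → ℕ → ℕ → ℝ)
    (hθ0 : ∀ k i j, 0 ≤ θ k i j)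
    (k : ℕ) (hk : k < K - 1) :
    ∑ e ∈ E k, aIn E θ k e.1 * θ k e.1 e.2 * aOut K E θ (k+1) e.2
      = phiTot K E θ :=
  saliency_sum_eq_phiTot_general K E θ k hk
end

section
/- Shifting first-layer mass between input edges targeting the same second-layer node preserves φ^tot: if W and W' agree on all edges outside E_1, both have positive total first-layer weight, and for every node j ∈ V_2 the sums Σ_{i∈V_1} |W_{i,j}| / S_1 and Σ_{i∈V_1} |W'_{i,j}| / S'_1 coincide (where S_1, S'_1 are the respective first-layer total absolute weights), then φ^tot(W') = φ^tot(W). -/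
open Finset

/-!
Splitting an input–output path at its first edge `e` writes `φ^tot` as
`∑_{e ∈ E_1} θ_1(e) · a_out(e.2)`, where `a_out` only involves the layers `k ≥ 2`, on which `W`
and `W'` agree. Grouping the first-layer edges by their target `j`, `φ^tot` is thus a fixed
linear combination of the masses `∑_{e.2 = j} θ_1(e)`, which the hypothesis says coincide.
-/

open Fintype

lemma sum_mul_comp_eq_of_sum_fiber_eq {ι κ R : Type*} [DecidableEq κ]
    [NonUnitalNonAssocSemiring R] {s : Finset ι} {g : ι → κ} {f f' : ι → R}
    (h : ∀ j, ∑ i ∈ s with g i = j, f i = ∑ i ∈ s with g i = j, f' i) (A : κ → R) :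
    ∑ i ∈ s, f i * A (g i) = ∑ i ∈ s, f' i * A (g i) := by
  have fiber (F : ι → R) (j : κ) :
      ∑ i ∈ s with g i = j, F i * A (g i) = (∑ i ∈ s with g i = j, F i) * A j := by
    rw [sum_mul]; exact sum_congr rfl fun i hi => by rw [(mem_filter.1 hi).2]
  rw [← sum_fiberwise_of_maps_to (t := s.image g) (fun i hi => mem_image_of_mem g hi),
    ← sum_fiberwise_of_maps_to (t := s.image g) (fun i hi => mem_image_of_mem g hi)]
  simp only [fiber, h]

def IsContiguous {n : ℕ} (γ : Fin n → ℕ × ℕ) : Prop :=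
  ∀ k : Fin n, ∀ h : k.val + 1 < n, (γ k).2 = (γ ⟨k.val + 1, h⟩).1

instance {n : ℕ} (γ : Fin n → ℕ × ℕ) : Decidable (IsContiguous γ) := by
  unfold IsContiguous; infer_instance

lemma isContiguous_cons_iff {m : ℕ} (e : ℕ × ℕ) (δ : Fin m → ℕ × ℕ) :
    IsContiguous (Fin.cons e δ : Fin (m + 1) → ℕ × ℕ) ↔
      (∀ h : 0 < m, e.2 = (δ ⟨0, h⟩).1) ∧ IsContiguous δ := by
  have cons_mk (i : ℕ) (h : i + 1 < m + 1) :
      (Fin.cons e δ : Fin (m + 1) → ℕ × ℕ) ⟨i + 1, h⟩ = δ ⟨i, by omega⟩ :=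
    Fin.cons_succ (α := fun _ => ℕ × ℕ) e δ ⟨i, by omega⟩
  unfold IsContiguous
  rw [Fin.forall_fin_succ]
  simp only [Fin.cons_zero, Fin.cons_succ, Fin.val_zero, Fin.val_succ, cons_mk]
  exact and_congr ⟨fun H h => H (by omega), fun H h => H (by omega)⟩
    (forall_congr' fun k => ⟨fun H h => H (by omega), fun H h => H (by omega)⟩)

lemma cons_mem_filter_isContiguous_iff {m : ℕ} (E : ℕ → Finset (ℕ × ℕ)) (e : ℕ × ℕ)
    (δ : Fin m → ℕ × ℕ) :
    (Fin.cons e δ : Fin (m + 1) → ℕ × ℕ) ∈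
        (piFinset fun k : Fin (m + 1) => E k).filter IsContiguous ↔
      e ∈ E 0 ∧ δ ∈ (piFinset fun k : Fin m => E (1 + k)).filter
        (fun δ => IsContiguous δ ∧ ∀ h : 0 < m, (δ ⟨0, h⟩).1 = e.2) := by
  simp only [mem_filter, isContiguous_cons_iff, mem_piFinset, Fin.forall_fin_succ, Fin.cons_zero,
    Fin.cons_succ, Fin.val_zero, Fin.val_succ, add_comm 1, eq_comm (a := e.2)]
  tauto

lemma phiTot_eq_sum_mul_aOut (m : ℕ) (E : ℕ → Finset (ℕ × ℕ)) (θ : ℕ → ℕ → ℕ → ℝ) :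
    phiTot (m + 2) E θ = ∑ e ∈ E 0, θ 0 e.1 e.2 * aOut (m + 2) E θ 1 e.2 := by
  -- `m + 2 - 1 = m + 1` and `m + 2 - 1 - 1 = m` hold definitionally
  show ∑ γ ∈ (piFinset fun k : Fin (m + 1) => E k).filter IsContiguous,
      ∏ k : Fin (m + 1), θ k (γ k).1 (γ k).2 =
    ∑ e ∈ E 0, θ 0 e.1 e.2 * ∑ δ ∈ (piFinset fun k : Fin m => E (1 + k)).filter
        (fun δ => IsContiguous δ ∧ ∀ h : 0 < m, (δ ⟨0, h⟩).1 = e.2),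
      ∏ k : Fin m, θ (1 + k) (δ k).1 (δ k).2
  simp_rw [mul_sum]
  rw [Finset.sum_sigma']
  refine sum_bij' (fun γ _ => ⟨γ 0, Fin.tail γ⟩) (fun p _ => Fin.cons p.1 p.2) ?_ ?_ ?_ ?_ ?_
  · intro γ hγ
    rw [← Fin.cons_self_tail γ, cons_mem_filter_isContiguous_iff] at hγ
    exact mem_sigma.2 hγ
  · intro p hp
    exact (cons_mem_filter_isContiguous_iff E p.1 p.2).2 (mem_sigma.1 hp)
  · intro γ _
    exact Fin.cons_self_tail γ
  · intro p _
    simp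
  · intro γ _
    rw [Fin.prod_univ_succ]
    simp [Fin.tail, add_comm]

lemma aOut_congr {K l : ℕ} {E : ℕ → Finset (ℕ × ℕ)} {θ θ' : ℕ → ℕ → ℕ → ℝ}
    (h : ∀ k, l ≤ k → θ k = θ' k) : aOut K E θ l = aOut K E θ' l := by
  funext r
  unfold aOut
  exact sum_congr rfl fun γ _ => prod_congr rfl fun k _ => by rw [h _ (Nat.le_add_right l k)]

lemma phiTot_congr_of_le_one {K : ℕ} (hK : K ≤ 1) (E : ℕ → Finset (ℕ × ℕ))
    (θ θ' : ℕ → ℕ → ℕ → ℝ) : phiTot K E θ = phiTot K E θ' := by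
  interval_cases K <;> simp [phiTot]

theorem phiTot_invariant_first_layer_shift_general
    (K : ℕ) (E : ℕ → Finset (ℕ × ℕ)) (W W' : ℕ → ℕ → ℕ → ℝ)
    (hagree : ∀ k, k ≠ 0 → W' k = W k)
    (hshift : ∀ j, ∑ e ∈ (E 0).filter (fun e => e.2 = j), thetaNorm E W 0 e.1 e.2
      = ∑ e ∈ (E 0).filter (fun e => e.2 = j), thetaNorm E W' 0 e.1 e.2) :
    phiTot K E (thetaNorm E W') = phiTot K E (thetaNorm E W) := by
  obtain hK | ⟨m, rfl⟩ : K ≤ 1 ∨ ∃ m, K = m + 2 := by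
    rcases K with _ | _ | m <;> simp
  · exact phiTot_congr_of_le_one hK E _ _
  have hθ : ∀ k, 1 ≤ k → thetaNorm E W' k = thetaNorm E W k := fun k hk => by
    funext i j
    simp only [thetaNorm, Snorm, hagree k (by omega)]
  rw [phiTot_eq_sum_mul_aOut, phiTot_eq_sum_mul_aOut, aOut_congr hθ]
  exact (sum_mul_comp_eq_of_sum_fiber_eq hshift _).symm

/-- shifting first-layer mass between input edges targeting the
same second-layer node preserves φ^tot. -/
theorem phiTot_invariant_first_layer_shift
    (K : ℕ) (E : ℕ → Finset (ℕ × ℕ)) (W W' : ℕ → ℕ → ℕ → ℝ)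
    (hagree : ∀ k, k ≠ 0 → W' k = W k)
    (hS : 0 < Snorm E W 0) (hS' : 0 < Snorm E W' 0)
    (hshift : ∀ j, ∑ e ∈ (E 0).filter (fun e => e.2 = j), thetaNorm E W 0 e.1 e.2
      = ∑ e ∈ (E 0).filter (fun e => e.2 = j), thetaNorm E W' 0 e.1 e.2) :
    phiTot K E (thetaNorm E W') = phiTot K E (thetaNorm E W) :=
  phiTot_invariant_first_layer_shift_general K E W W' hagree hshift
end

section
/- If the normalized weight vector θ within each layer lies in the probability simplex (nonnegative, summing to 1 per layer), then φ^tot(θ) = 1 if and only if every edge with θ_{i,j} > 0 lies on at least one input-output path consisting entirely of positive-weight edges, and moreover for k ≥ 2 the quantity a_{·i} = 1 whenever some edge (i,j) ∈ E_k has θ_{i,j} > 0. -/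
open Finset

/-- Auxiliary property: any two positive edges in consecutive layers are contiguous. -/
def GoodP (K : ℕ) (E : ℕ → Finset (ℕ × ℕ)) (θ : ℕ → ℕ → ℕ → ℝ) : Prop :=
  ∀ k, k + 1 < K - 1 → ∀ e ∈ E k, ∀ f ∈ E (k+1),
    0 < θ k e.1 e.2 → 0 < θ (k+1) f.1 f.2 → e.2 = f.1

lemma total_sum_eq_one (K l : ℕ) (E : ℕ → Finset (ℕ × ℕ)) (θ : ℕ → ℕ → ℕ → ℝ)
    (hsum : ∀ k, k < K - 1 → ∑ e ∈ E k, θ k e.1 e.2 = 1) (hl : l ≤ K - 1) :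
    ∑ γ ∈ Fintype.piFinset (fun k : Fin l => E k.val),
      ∏ k : Fin l, θ k.val (γ k).1 (γ k).2 = 1 := by
  have h := Finset.prod_univ_sum (fun k : Fin l => E k.val)
    (fun (k : Fin l) (p : ℕ × ℕ) => θ k.val p.1 p.2)
  rw [← h]
  exact Finset.prod_eq_one fun k _ => hsum k.val (by have := k.isLt; omega)

lemma exists_pos_edge (K : ℕ) (E : ℕ → Finset (ℕ × ℕ)) (θ : ℕ → ℕ → ℕ → ℝ)
    (hθ0 : ∀ k i j, 0 ≤ θ k i j)
    (hsum : ∀ k, k < K - 1 → ∑ e ∈ E k, θ k e.1 e.2 = 1)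
    (k : ℕ) (hk : k < K - 1) : ∃ e ∈ E k, 0 < θ k e.1 e.2 := by
  by_contra h
  push_neg at h
  have h0 : ∑ e ∈ E k, θ k e.1 e.2 = 0 :=
    Finset.sum_eq_zero fun e he => le_antisymm (h e he) (hθ0 _ _ _)
  rw [hsum k hk] at h0
  norm_num at h0

/-- Sum of `aIn` at two distinct nodes of the same layer is at most 1. -/
lemma aIn_add_le_one (K : ℕ) (E : ℕ → Finset (ℕ × ℕ)) (θ : ℕ → ℕ → ℕ → ℝ)
    (hθ0 : ∀ k i j, 0 ≤ θ k i j)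
    (hsum : ∀ k, k < K - 1 → ∑ e ∈ E k, θ k e.1 e.2 = 1)
    (l r r' : ℕ) (hl : 0 < l) (hlK : l ≤ K - 1) (hrr' : r ≠ r') :
    aIn E θ l r + aIn E θ l r' ≤ 1 := by
  unfold aIn
  set s := Fintype.piFinset (fun k : Fin l => E k.val) with hs
  set p : (Fin l → ℕ × ℕ) → Prop := fun γ =>
    (∀ k : Fin l, ∀ h : k.val + 1 < l, (γ k).2 = (γ ⟨k.val + 1, h⟩).1)
      ∧ ∀ _h : 0 < l, (γ ⟨l - 1, by omega⟩).2 = r with hp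
  set q : (Fin l → ℕ × ℕ) → Prop := fun γ =>
    (∀ k : Fin l, ∀ h : k.val + 1 < l, (γ k).2 = (γ ⟨k.val + 1, h⟩).1)
      ∧ ∀ _h : 0 < l, (γ ⟨l - 1, by omega⟩).2 = r' with hq
  have hdisj : Disjoint (s.filter p) (s.filter q) := by
    rw [Finset.disjoint_left]
    intro γ hA hB
    rw [Finset.mem_filter] at hA hB
    exact hrr' ((hA.2.2 hl).symm.trans (hB.2.2 hl))
  calc (∑ γ ∈ s.filter p, ∏ k : Fin l, θ k.val (γ k).1 (γ k).2)
        + ∑ γ ∈ s.filter q, ∏ k : Fin l, θ k.val (γ k).1 (γ k).2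
      = ∑ γ ∈ s.filter p ∪ s.filter q, ∏ k : Fin l, θ k.val (γ k).1 (γ k).2 :=
        (Finset.sum_union hdisj).symm
    _ ≤ ∑ γ ∈ s, ∏ k : Fin l, θ k.val (γ k).1 (γ k).2 := by
        apply Finset.sum_le_sum_of_subset_of_nonneg
        · exact Finset.union_subset (Finset.filter_subset _ _) (Finset.filter_subset _ _)
        · intro γ _ _
          exact Finset.prod_nonneg fun k _ => hθ0 _ _ _
    _ = 1 := total_sum_eq_one K l E θ hsum hlK

/-- `phiTot = 1` iff `GoodP`. -/
lemma phiTot_eq_one_iff_goodP (K : ℕ) (hK : 2 ≤ K) (E : ℕ → Finset (ℕ × ℕ))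
    (θ : ℕ → ℕ → ℕ → ℝ) (hθ0 : ∀ k i j, 0 ≤ θ k i j)
    (hsum : ∀ k, k < K - 1 → ∑ e ∈ E k, θ k e.1 e.2 = 1) :
    phiTot K E θ = 1 ↔ GoodP K E θ := by
  have hKpos : 0 < K - 1 := by omega
  set s := Fintype.piFinset (fun k : Fin (K-1) => E k.val) with hs
  have hsplit := Finset.sum_filter_add_sum_filter_not s (fun γ => Contig K γ)
    (fun γ => ∏ k : Fin (K-1), θ k.val (γ k).1 (γ k).2)
  have htot : ∑ γ ∈ s, ∏ k : Fin (K-1), θ k.val (γ k).1 (γ k).2 = 1 :=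
    total_sum_eq_one K (K-1) E θ hsum le_rfl
  constructor
  · intro hphi
    have hzero : ∑ γ ∈ s.filter (fun γ => ¬ Contig K γ),
        ∏ k : Fin (K-1), θ k.val (γ k).1 (γ k).2 = 0 := by
      have : phiTot K E θ + ∑ γ ∈ s.filter (fun γ => ¬ Contig K γ),
          ∏ k : Fin (K-1), θ k.val (γ k).1 (γ k).2 = 1 := by
        rw [phiTot]; rw [← hs] at *; rw [hsplit] at *; exact htot
      rw [hphi] at this; linarith
    have hzero' : ∀ γ ∈ s.filter (fun γ => ¬ Contig K γ),
        ∏ k : Fin (K-1), θ k.val (γ k).1 (γ k).2 = 0 := by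
      intro γ hγ
      have hnn : ∀ γ ∈ s.filter (fun γ => ¬ Contig K γ),
          0 ≤ ∏ k : Fin (K-1), θ k.val (γ k).1 (γ k).2 :=
        fun γ _ => Finset.prod_nonneg fun k _ => hθ0 _ _ _
      exact (Finset.sum_eq_zero_iff_of_nonneg hnn).mp hzero γ hγ
    intro k hk1 e he f hf hpe hpf
    by_contra hne
    obtain ⟨pos, hposE, hpos⟩ :
        ∃ pos : Fin (K-1) → ℕ × ℕ, (∀ k' : Fin (K-1), pos k' ∈ E k'.val) ∧
          ∀ k' : Fin (K-1), 0 < θ k'.val (pos k').1 (pos k').2 := by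
      have := fun k' : Fin (K-1) => exists_pos_edge K E θ hθ0 hsum k'.val k'.isLt
      choose pos h1 h2 using this
      exact ⟨pos, h1, h2⟩
    set γ0 : Fin (K-1) → ℕ × ℕ := fun k' =>
      if k'.val = k then e else if k'.val = k + 1 then f else pos k' with hγ0
    have hmem : γ0 ∈ s := by
      rw [hs, Fintype.mem_piFinset]
      intro k'
      rw [hγ0]
      dsimp only
      split_ifs with h1 h2
      · rw [h1]; exact he
      · rw [h2]; exact hf
      · exact hposE k'
    have hγ0pos : ∀ k' : Fin (K-1), 0 < θ k'.val (γ0 k').1 (γ0 k').2 := by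
      intro k'
      rw [hγ0]
      dsimp only
      split_ifs with h1 h2
      · rw [h1]; exact hpe
      · rw [h2]; exact hpf
      · exact hpos k'
    have e1 : γ0 ⟨k, by omega⟩ = e := by
      rw [hγ0]; dsimp only; rw [if_pos rfl]
    have e2 : γ0 ⟨k + 1, hk1⟩ = f := by
      rw [hγ0]; dsimp only; rw [if_neg (by omega), if_pos rfl]
    have hnc : ¬ Contig K γ0 := by
      intro hC
      exact hne (by rw [← e1, ← e2]; exact hC ⟨k, by omega⟩ hk1)
    have h0 : ∏ k : Fin (K-1), θ k.val (γ0 k).1 (γ0 k).2 = 0 :=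
      hzero' γ0 (Finset.mem_filter.mpr ⟨hmem, hnc⟩)
    have hpos' : 0 < ∏ k : Fin (K-1), θ k.val (γ0 k).1 (γ0 k).2 :=
      Finset.prod_pos fun k _ => hγ0pos k
    rw [h0] at hpos'
    exact lt_irrefl 0 hpos'
  · intro hP
    have hzero : ∑ γ ∈ s.filter (fun γ => ¬ Contig K γ),
        ∏ k : Fin (K-1), θ k.val (γ k).1 (γ k).2 = 0 := by
      apply Finset.sum_eq_zero
      intro γ hγ
      rw [Finset.mem_filter] at hγ
      by_cases hall : ∀ k' : Fin (K-1), 0 < θ k'.val (γ k').1 (γ k').2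
      · exfalso
        apply hγ.2
        intro k h
        have hmemk : γ k ∈ E k.val := by
          rw [hs, Fintype.mem_piFinset] at hγ
          exact hγ.1 k
        have hmemk1 : γ ⟨k.val + 1, h⟩ ∈ E (k.val + 1) := by
          have := (Fintype.mem_piFinset.mp (hs ▸ hγ.1)) ⟨k.val + 1, h⟩
          exact this
        exact hP k.val h (γ k) hmemk (γ ⟨k.val + 1, h⟩) hmemk1 (hall k) (hall ⟨k.val + 1, h⟩)
      · push_neg at hall
        obtain ⟨k', hk'⟩ := hall
        have : θ k'.val (γ k').1 (γ k').2 = 0 := le_antisymm hk' (hθ0 _ _ _)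
        exact Finset.prod_eq_zero (Finset.mem_univ k') this
    rw [phiTot, ← hs]
    rw [hzero] at hsplit
    rw [add_zero] at hsplit
    rw [hsplit]
    exact htot

/-- for per-layer simplex-normalized θ, φ^tot(θ) = 1 iff every
positive-weight edge lies on a fully positive input-output path, and for layers
k ≥ 2 the incoming connectivity a_{·i} equals 1 at sources of positive edges. -/
theorem phiTot_eq_one_iff
    (K : ℕ) (hK : 2 ≤ K) (E : ℕ → Finset (ℕ × ℕ)) (θ : ℕ → ℕ → ℕ → ℝ)
    (hθ0 : ∀ k i j, 0 ≤ θ k i j)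
    (hsum : ∀ k, k < K - 1 → ∑ e ∈ E k, θ k e.1 e.2 = 1) :
    phiTot K E θ = 1 ↔
      ((∀ k (hk : k < K - 1), ∀ e ∈ E k, 0 < θ k e.1 e.2 →
          ∃ γ : Fin (K-1) → ℕ × ℕ, (∀ k', γ k' ∈ E k'.val) ∧ Contig K γ ∧
            (∀ k' : Fin (K-1), 0 < θ k'.val (γ k').1 (γ k').2) ∧ γ ⟨k, hk⟩ = e)
        ∧ ∀ k, 1 ≤ k → k < K - 1 → ∀ e ∈ E k, 0 < θ k e.1 e.2 →
            aIn E θ k e.1 = 1) := by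
  rw [phiTot_eq_one_iff_goodP K hK E θ hθ0 hsum]
  constructor
  · intro hP
    constructor
    · -- positive edges lie on positive contiguous paths
      intro k hk e he hpe
      obtain ⟨pos, hposE, hpos⟩ :
          ∃ pos : Fin (K-1) → ℕ × ℕ, (∀ k' : Fin (K-1), pos k' ∈ E k'.val) ∧
            ∀ k' : Fin (K-1), 0 < θ k'.val (pos k').1 (pos k').2 := by
        have := fun k' : Fin (K-1) => exists_pos_edge K E θ hθ0 hsum k'.val k'.isLt
        choose pos h1 h2 using this
        exact ⟨pos, h1, h2⟩
      refine ⟨fun k' => if k'.val = k then e else pos k', ?_, ?_, ?_, ?_⟩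
      · intro k'
        dsimp only
        split_ifs with h1
        · rw [h1]; exact he
        · exact hposE k'
      · intro k' h
        dsimp only
        have hEk' : (if k'.val = k then e else pos k') ∈ E k'.val := by
          split_ifs with h1
          · rw [h1]; exact he
          · exact hposE k'
        have hEk1 : (if k'.val + 1 = k then e else pos ⟨k'.val + 1, h⟩) ∈ E (k'.val + 1) := by
          split_ifs with h1
          · rw [h1]; exact he
          · exact hposE ⟨k'.val + 1, h⟩
        have hpk' : 0 < θ k'.val (if k'.val = k then e else pos k').1
            (if k'.val = k then e else pos k').2 := by
          split_ifs with h1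
          · rw [h1]; exact hpe
          · exact hpos k'
        have hpk1 : 0 < θ (k'.val + 1) (if k'.val + 1 = k then e else pos ⟨k'.val + 1, h⟩).1
            (if k'.val + 1 = k then e else pos ⟨k'.val + 1, h⟩).2 := by
          split_ifs with h1
          · rw [h1]; exact hpe
          · exact hpos ⟨k'.val + 1, h⟩
        exact hP k'.val h _ hEk' _ hEk1 hpk' hpk1
      · intro k'
        dsimp only
        split_ifs with h1
        · rw [h1]; exact hpe
        · exact hpos k'
      · simp
    · -- aIn = 1 at sources of positive edges beyond layer 1
      intro k hk1 hk e he hpe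
      obtain ⟨m, rfl⟩ : ∃ m, k = m + 1 := ⟨k - 1, by omega⟩
      unfold aIn
      set s := Fintype.piFinset (fun k' : Fin (m+1) => E k'.val) with hs
      set p : (Fin (m+1) → ℕ × ℕ) → Prop := fun γ =>
        (∀ k' : Fin (m+1), ∀ h : k'.val + 1 < m + 1, (γ k').2 = (γ ⟨k'.val + 1, h⟩).1)
          ∧ ∀ _h : 0 < m + 1, (γ ⟨m + 1 - 1, by omega⟩).2 = e.1 with hpdef
      have hsplit := Finset.sum_filter_add_sum_filter_not s p
        (fun γ => ∏ k' : Fin (m+1), θ k'.val (γ k').1 (γ k').2)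
      have htot : ∑ γ ∈ s, ∏ k' : Fin (m+1), θ k'.val (γ k').1 (γ k').2 = 1 :=
        total_sum_eq_one K (m+1) E θ hsum (by omega)
      have hzero : ∑ γ ∈ s.filter (fun γ => ¬ p γ),
          ∏ k' : Fin (m+1), θ k'.val (γ k').1 (γ k').2 = 0 := by
        apply Finset.sum_eq_zero
        intro γ hγ
        rw [Finset.mem_filter] at hγ
        by_cases hall : ∀ k' : Fin (m+1), 0 < θ k'.val (γ k').1 (γ k').2
        · exfalso
          apply hγ.2
          have hγE : ∀ k' : Fin (m+1), γ k' ∈ E k'.val :=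
            Fintype.mem_piFinset.mp (hs ▸ hγ.1)
          constructor
          · intro k' h
            exact hP k'.val (by omega) (γ k') (hγE k') (γ ⟨k'.val + 1, h⟩)
              (hγE ⟨k'.val + 1, h⟩) (hall k') (hall ⟨k'.val + 1, h⟩)
          · intro _h
            have hlast : γ ⟨m + 1 - 1, by omega⟩ = γ ⟨m, by omega⟩ := rfl
            rw [hlast]
            exact hP m (by omega) (γ ⟨m, by omega⟩) (hγE ⟨m, by omega⟩) e he
              (hall ⟨m, by omega⟩) hpe
        · push_neg at hall
          obtain ⟨k', hk'⟩ := hall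
          have : θ k'.val (γ k').1 (γ k').2 = 0 := le_antisymm hk' (hθ0 _ _ _)
          exact Finset.prod_eq_zero (Finset.mem_univ k') this
      rw [hzero, add_zero] at hsplit
      rw [hsplit]
      exact htot
  · -- RHS → GoodP
    rintro ⟨hpath, haIn⟩
    intro k hk1 e he f hf hpe hpf
    by_contra hne
    obtain ⟨γ, hγE, hγC, hγpos, hγe⟩ := hpath k (by omega) e he hpe
    set g : ℕ × ℕ := γ ⟨k + 1, hk1⟩ with hg
    have hg1 : g.1 = e.2 := by
      have := hγC ⟨k, by omega⟩ hk1
      rw [hγe] at this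
      exact this.symm
    have hgE : g ∈ E (k + 1) := hγE ⟨k + 1, hk1⟩
    have hgpos : 0 < θ (k + 1) g.1 g.2 := hγpos ⟨k + 1, hk1⟩
    have h1 : aIn E θ (k+1) e.2 = 1 := by
      have := haIn (k+1) (by omega) (by omega) g hgE hgpos
      rwa [hg1] at this
    have h2 : aIn E θ (k+1) f.1 = 1 := haIn (k+1) (by omega) (by omega) f hf hpf
    have := aIn_add_le_one K E θ hθ0 hsum (k+1) e.2 f.1 (by omega) (by omega) hne
    rw [h1, h2] at this
    linarith
end

section
/- For any connected weight configuration (φ^tot(W) > 0) that is not a global maximizer (φ^tot(W) < 1), there exists a direction of weight perturbation that strictly increases φ^tot; equivalently, over the product of per-layer probability simplices, every local maximizer of φ^tot is a global maximizer with value 1 (assuming every layer contains at least one edge on some complete input-output path). -/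
open Finset

/-!
The value `φ = pathSum` is affine in the weights of each layer: the coefficient of the weight of
an edge is the total weight of the paths through it, the edge itself left out. At a local
maximum, moving mass in one layer towards a single edge cannot increase `φ`, so every edge
coefficient is at most `φ`, with equality on the edges of positive weight. Moving mass towards
a complete path shows `φ > 0`.

If `φ < 1`, some tuple of edges of positive weight is not a path, which gives supported edges
`e` in layer `k` and `f` in layer `k + 1` with `e.2 ≠ f.1`. The paths through the node `e.2`
then carry `P ≤ φ - w f * φ < φ`. Pick a supported edge `g` leaving `e.2`, and let `G` be the
weight of the paths through both `e` and `g`, their own weights left out. Moving mass towards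
`e` and `g` simultaneously changes `φ` by `t² (G - φ)`, and `G * P = φ²`, so `G > φ`: the
point is not a local maximum.
-/

open Function

section TupleSums

variable {α β : Type*} [AddCommMonoid β] {n : ℕ}

lemma sum_filter_piFinset_cons (S : Fin (n + 1) → Finset α) (P : (Fin (n + 1) → α) → Prop)
    [DecidablePred P] (g : (Fin (n + 1) → α) → β) :
    ∑ γ ∈ (Fintype.piFinset S).filter P, g γ =
      ∑ e ∈ S 0, ∑ δ ∈ (Fintype.piFinset (Fin.tail S)).filter (fun δ => P (Fin.cons e δ)),
        g (Fin.cons e δ) := by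
  rw [sum_sigma']
  refine sum_nbij' (fun γ => ⟨γ 0, Fin.tail γ⟩) (fun p => Fin.cons p.1 p.2) ?_ ?_ ?_ ?_ ?_
  · intro γ hγ
    simpa only [mem_filter, mem_sigma, Fin.mem_piFinset_iff_zero_tail, Fin.cons_self_tail,
      and_assoc] using hγ
  · rintro ⟨e, δ⟩ hp
    simpa only [mem_filter, mem_sigma, Fin.mem_piFinset_iff_zero_tail, Fin.cons_zero,
      Fin.tail_cons, and_assoc] using hp
  · intro γ _
    exact Fin.cons_self_tail γ
  · rintro ⟨e, δ⟩ _
    simp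
  · intro γ _
    simp

lemma sum_filter_piFinset_snoc (S : Fin (n + 1) → Finset α) (P : (Fin (n + 1) → α) → Prop)
    [DecidablePred P] (g : (Fin (n + 1) → α) → β) :
    ∑ γ ∈ (Fintype.piFinset S).filter P, g γ =
      ∑ e ∈ S (Fin.last n), ∑ δ ∈ (Fintype.piFinset (Fin.init S)).filter
        (fun δ => P (Fin.snoc δ e)), g (Fin.snoc δ e) := by
  rw [sum_sigma']
  refine sum_nbij' (fun γ => ⟨γ (Fin.last n), Fin.init γ⟩) (fun p => Fin.snoc p.2 p.1)
    ?_ ?_ ?_ ?_ ?_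
  · intro γ hγ
    simpa only [mem_filter, mem_sigma, Fin.mem_piFinset_iff_last_init, Fin.snoc_init_self,
      and_assoc] using hγ
  · rintro ⟨e, δ⟩ hp
    simpa only [mem_filter, mem_sigma, Fin.mem_piFinset_iff_last_init, Fin.snoc_last,
      Fin.init_snoc, and_assoc] using hp
  · intro γ _
    exact Fin.snoc_init_self γ
  · rintro ⟨e, δ⟩ _
    simp
  · intro γ _
    simp

end TupleSums

lemma smul_add_smul_update {ι R β : Type*} [DecidableEq ι] [Semiring R] [AddCommMonoid β]
    [Module R β] (w v : ι → β) (j : ι) (u : β) (s t : R) :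
    s • w + t • update v j u = update (s • w + t • v) j (s • w j + t • u) := by
  funext i
  by_cases h : i = j
  · subst h
    simp
  · simp [update_of_ne h]

def IsPath {n : ℕ} (γ : Fin n → ℕ × ℕ) : Prop :=
  ∀ k : Fin n, ∀ h : k.val + 1 < n, (γ k).2 = (γ ⟨k.val + 1, h⟩).1

instance {n : ℕ} (γ : Fin n → ℕ × ℕ) : Decidable (IsPath γ) := by
  unfold IsPath; infer_instance

def IsPathFrom {n : ℕ} (r : ℕ) (γ : Fin n → ℕ × ℕ) : Prop :=
  IsPath γ ∧ ∀ h : 0 < n, (γ ⟨0, h⟩).1 = r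

instance {n : ℕ} (r : ℕ) (γ : Fin n → ℕ × ℕ) : Decidable (IsPathFrom r γ) := by
  unfold IsPathFrom; infer_instance

def IsPathTo {n : ℕ} (r : ℕ) (γ : Fin n → ℕ × ℕ) : Prop :=
  IsPath γ ∧ ∀ h : 0 < n, (γ ⟨n - 1, by omega⟩).2 = r

instance {n : ℕ} (r : ℕ) (γ : Fin n → ℕ × ℕ) : Decidable (IsPathTo r γ) := by
  unfold IsPathTo; infer_instance

section Paths

variable {n : ℕ}

lemma isPath_succ_iff {γ : Fin (n + 1) → ℕ × ℕ} :
    IsPath γ ↔ ∀ i : Fin n, (γ i.castSucc).2 = (γ i.succ).1 :=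
  ⟨fun h i => h i.castSucc (by simp), fun h k hk => h ⟨k, by omega⟩⟩

lemma isPathFrom_zero (r : ℕ) (γ : Fin 0 → ℕ × ℕ) : IsPathFrom r γ :=
  ⟨fun k => k.elim0, fun h => absurd h (lt_irrefl 0)⟩

lemma isPathTo_zero (r : ℕ) (γ : Fin 0 → ℕ × ℕ) : IsPathTo r γ :=
  ⟨fun k => k.elim0, fun h => absurd h (lt_irrefl 0)⟩

lemma isPath_cons (e : ℕ × ℕ) (δ : Fin n → ℕ × ℕ) :
    IsPath (Fin.cons e δ : Fin (n + 1) → ℕ × ℕ) ↔ IsPathFrom e.2 δ := by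
  cases n with
  | zero => simp [isPath_succ_iff, isPathFrom_zero]
  | succ m => simp [isPath_succ_iff, Fin.forall_fin_succ, IsPathFrom, eq_comm, and_comm]

lemma isPathFrom_cons (r : ℕ) (e : ℕ × ℕ) (δ : Fin n → ℕ × ℕ) :
    IsPathFrom r (Fin.cons e δ : Fin (n + 1) → ℕ × ℕ) ↔ e.1 = r ∧ IsPathFrom e.2 δ := by
  simp [IsPathFrom, isPath_cons, and_comm]

lemma isPath_snoc (δ : Fin n → ℕ × ℕ) (e : ℕ × ℕ) :
    IsPath (Fin.snoc δ e : Fin (n + 1) → ℕ × ℕ) ↔ IsPathTo e.1 δ := by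
  cases n with
  | zero => simp [isPath_succ_iff, isPathTo_zero]
  | succ m =>
    have hlast : (⟨m, by omega⟩ : Fin (m + 1)) = Fin.last m := rfl
    simp [isPath_succ_iff, Fin.forall_fin_succ', IsPathTo, Fin.succ_castSucc,
      -Fin.castSucc_succ, hlast]

lemma isPathTo_snoc (r : ℕ) (δ : Fin n → ℕ × ℕ) (e : ℕ × ℕ) :
    IsPathTo r (Fin.snoc δ e : Fin (n + 1) → ℕ × ℕ) ↔ e.2 = r ∧ IsPathTo e.1 δ := by
  have hlast : (⟨n, by omega⟩ : Fin (n + 1)) = Fin.last n := rfl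
  simp [IsPathTo, isPath_snoc, and_comm, hlast]

end Paths

-- `w j (a, b)` is the weight of the edge from node `a` to node `b` in layer `j`.
noncomputable def pathSum (F : ℕ → Finset (ℕ × ℕ)) (w : ℕ → ℕ × ℕ → ℝ) (n : ℕ) : ℝ :=
  ∑ γ ∈ (Fintype.piFinset fun k : Fin n => F k).filter IsPath, ∏ k : Fin n, w k (γ k)

noncomputable def inSum (F : ℕ → Finset (ℕ × ℕ)) (w : ℕ → ℕ × ℕ → ℝ) (l r : ℕ) : ℝ :=
  ∑ γ ∈ (Fintype.piFinset fun k : Fin l => F k).filter (IsPathTo r), ∏ k : Fin l, w k (γ k)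

noncomputable def outSum (F : ℕ → Finset (ℕ × ℕ)) (w : ℕ → ℕ × ℕ → ℝ) (l m r : ℕ) : ℝ :=
  ∑ γ ∈ (Fintype.piFinset fun k : Fin m => F (k + l)).filter (IsPathFrom r),
    ∏ k : Fin m, w (k + l) (γ k)

noncomputable def pathSumCoeff (F : ℕ → Finset (ℕ × ℕ)) (w : ℕ → ℕ × ℕ → ℝ) (n j : ℕ)
    (x : ℕ × ℕ) : ℝ :=
  inSum F w j x.1 * outSum F w (j + 1) (n - j - 1) x.2

section PathSums

variable (F : ℕ → Finset (ℕ × ℕ)) (w : ℕ → ℕ × ℕ → ℝ)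

lemma inSum_zero (r : ℕ) : inSum F w 0 r = 1 := by
  simp [inSum, filter_true_of_mem fun γ _ => isPathTo_zero r γ]

lemma pathSum_succ (m : ℕ) :
    pathSum F w (m + 1) = ∑ e ∈ F 0, w 0 e * outSum F w 1 m e.2 := by
  rw [pathSum, sum_filter_piFinset_cons]
  refine sum_congr rfl fun e _ => ?_
  rw [outSum, mul_sum]
  simp_rw [isPath_cons, Fin.prod_univ_succ]
  rfl

lemma outSum_succ (l m r : ℕ) :
    outSum F w l (m + 1) r =
      ∑ e ∈ (F l).filter (·.1 = r), w l e * outSum F w (l + 1) m e.2 := by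
  have hS : Fin.tail (fun k : Fin (m + 1) => F (k + l)) = fun k : Fin m => F (k + (l + 1)) := by
    funext k
    simp only [Fin.tail, Fin.val_succ, add_assoc, add_comm 1 l]
  rw [outSum, sum_filter_piFinset_cons, sum_filter]
  simp only [Fin.val_zero, zero_add]
  refine sum_congr rfl fun e _ => ?_
  split_ifs with he
  · rw [outSum, mul_sum]
    simp_rw [isPathFrom_cons, he, true_and, hS, Fin.prod_univ_succ]
    refine sum_congr rfl fun δ _ => ?_
    simp only [Fin.cons_zero, Fin.cons_succ, Fin.val_zero, Fin.val_succ, zero_add,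
      add_assoc, add_comm 1 l]
  · refine sum_eq_zero fun δ hδ => ?_
    rw [mem_filter, isPathFrom_cons] at hδ
    exact absurd hδ.2.1 he

lemma inSum_succ (l r : ℕ) :
    inSum F w (l + 1) r = ∑ e ∈ (F l).filter (·.2 = r), w l e * inSum F w l e.1 := by
  rw [inSum, sum_filter_piFinset_snoc, sum_filter]
  refine sum_congr rfl fun e _ => ?_
  split_ifs with he
  · rw [inSum, mul_sum]
    simp_rw [isPathTo_snoc, he, true_and, Fin.prod_univ_castSucc]
    refine sum_congr rfl fun δ _ => ?_
    simp [mul_comm]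
  · refine sum_eq_zero fun δ hδ => ?_
    rw [mem_filter, isPathTo_snoc] at hδ
    exact absurd hδ.2.1 he

lemma pathSum_eq_sum_mul_coeff {n j : ℕ} (hj : j < n) :
    pathSum F w n = ∑ x ∈ F j, w j x * pathSumCoeff F w n j x := by
  induction j with
  | zero =>
    obtain ⟨m, rfl⟩ : ∃ m, n = m + 1 := ⟨n - 1, by omega⟩
    simp [pathSum_succ, pathSumCoeff, inSum_zero]
  | succ j ih =>
    have hout : n - j - 1 = n - (j + 1) - 1 + 1 := by omega
    calc pathSum F w n
        = ∑ x ∈ F j, ∑ y ∈ (F (j + 1)).filter (·.1 = x.2),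
            w j x * inSum F w j x.1 *
              (w (j + 1) y * outSum F w (j + 1 + 1) (n - (j + 1) - 1) y.2) := by
          rw [ih (by omega)]
          refine sum_congr rfl fun x _ => ?_
          rw [pathSumCoeff, hout, outSum_succ, mul_sum, mul_sum]
          refine sum_congr rfl fun y _ => ?_
          ring
      _ = ∑ y ∈ F (j + 1), ∑ x ∈ (F j).filter (·.2 = y.1),
            w j x * inSum F w j x.1 *
              (w (j + 1) y * outSum F w (j + 1 + 1) (n - (j + 1) - 1) y.2) :=
          sum_comm' fun x y => by simp only [mem_filter]; tauto
      _ = ∑ y ∈ F (j + 1), w (j + 1) y * pathSumCoeff F w n (j + 1) y := by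
          refine sum_congr rfl fun y _ => ?_
          rw [pathSumCoeff, inSum_succ, sum_mul, mul_sum]
          refine sum_congr rfl fun x _ => ?_
          ring

lemma inSum_mul_outSum_eq_sum_coeff {n j : ℕ} (hj : j < n) (r : ℕ) :
    inSum F w j r * outSum F w j (n - j) r =
      ∑ y ∈ (F j).filter (·.1 = r), w j y * pathSumCoeff F w n j y := by
  rw [show n - j = n - j - 1 + 1 by omega, outSum_succ, mul_sum]
  refine sum_congr rfl fun y hy => ?_
  rw [pathSumCoeff, (mem_filter.1 hy).2]
  ring

variable {F w}

lemma inSum_congr {w' : ℕ → ℕ × ℕ → ℝ} {l : ℕ} (h : ∀ i < l, w i = w' i) (r : ℕ) :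
    inSum F w l r = inSum F w' l r :=
  sum_congr rfl fun _ _ => prod_congr rfl fun k _ => by rw [h k k.isLt]

lemma outSum_congr {w' : ℕ → ℕ × ℕ → ℝ} {l : ℕ} (h : ∀ i, l ≤ i → w i = w' i) (m r : ℕ) :
    outSum F w l m r = outSum F w' l m r :=
  sum_congr rfl fun _ _ => prod_congr rfl fun k _ => by rw [h (k + l) (by omega)]

variable (F w)

lemma pathSumCoeff_update (n j : ℕ) (u : ℕ × ℕ → ℝ) (x : ℕ × ℕ) :
    pathSumCoeff F (update w j u) n j x = pathSumCoeff F w n j x := by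
  rw [pathSumCoeff, pathSumCoeff,
    inSum_congr (fun i hi => update_of_ne (by omega) u w),
    outSum_congr (fun i hi => update_of_ne (by omega) u w)]

lemma pathSum_update {n j : ℕ} (hj : j < n) (u : ℕ × ℕ → ℝ) :
    pathSum F (update w j u) n = ∑ x ∈ F j, u x * pathSumCoeff F w n j x := by
  simp_rw [pathSum_eq_sum_mul_coeff F _ hj, update_self, pathSumCoeff_update]

lemma pathSum_update_smul_add_smul {n j : ℕ} (hj : j < n) (a b : ℕ × ℕ → ℝ) (s t : ℝ) :
    pathSum F (update w j (s • a + t • b)) n =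
      s * pathSum F (update w j a) n + t * pathSum F (update w j b) n := by
  simp_rw [pathSum_update F w hj, mul_sum, ← sum_add_distrib, Pi.add_apply, Pi.smul_apply,
    smul_eq_mul]
  refine sum_congr rfl fun x _ => ?_
  ring

lemma pathSum_update_single {n j : ℕ} (hj : j < n) {x : ℕ × ℕ} (hx : x ∈ F j) :
    pathSum F (update w j (Pi.single x 1)) n = pathSumCoeff F w n j x := by
  simp [pathSum_update F w hj, Pi.single_apply, hx]

lemma pathSum_update_single_update_single {n k : ℕ} (hk : k + 1 < n) {e g : ℕ × ℕ}
    (he : e ∈ F k) (hg : g ∈ F (k + 1)) (heg : e.2 = g.1) :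
    pathSum F (update (update w k (Pi.single e 1)) (k + 1) (Pi.single g 1)) n =
      inSum F w k e.1 * outSum F w (k + 2) (n - k - 2) g.2 := by
  rw [pathSum_update_single _ _ hk hg, pathSumCoeff, inSum_succ, update_self,
    sum_eq_single_of_mem e (mem_filter.2 ⟨he, heg⟩) fun x _ hxe => by simp [hxe],
    Pi.single_eq_same, one_mul, inSum_congr (fun i hi => update_of_ne (by omega) _ _),
    outSum_congr (fun i hi => update_of_ne (by omega) _ _)]
  rfl

end PathSums

section Nonneg

variable {F : ℕ → Finset (ℕ × ℕ)} {w : ℕ → ℕ × ℕ → ℝ} (hw : ∀ j e, 0 ≤ w j e)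
include hw

lemma inSum_nonneg (l r : ℕ) : 0 ≤ inSum F w l r :=
  sum_nonneg fun _ _ => prod_nonneg fun _ _ => hw _ _

lemma outSum_nonneg (l m r : ℕ) : 0 ≤ outSum F w l m r :=
  sum_nonneg fun _ _ => prod_nonneg fun _ _ => hw _ _

lemma pathSumCoeff_nonneg (n j : ℕ) (x : ℕ × ℕ) : 0 ≤ pathSumCoeff F w n j x :=
  mul_nonneg (inSum_nonneg hw _ _) (outSum_nonneg hw _ _ _)

end Nonneg

def IsStochastic (F : ℕ → Finset (ℕ × ℕ)) (n : ℕ) (w : ℕ → ℕ × ℕ → ℝ) : Prop :=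
  (∀ j e, 0 ≤ w j e) ∧ ∀ j < n, ∑ e ∈ F j, w j e = 1

namespace IsStochastic

variable {F : ℕ → Finset (ℕ × ℕ)} {n : ℕ} {w v : ℕ → ℕ × ℕ → ℝ}

lemma le_one (hw : IsStochastic F n w) {j : ℕ} (hj : j < n) {e : ℕ × ℕ} (he : e ∈ F j) :
    w j e ≤ 1 :=
  hw.2 j hj ▸ single_le_sum (fun x _ => hw.1 j x) he

lemma smul_add_smul (hw : IsStochastic F n w) (hv : IsStochastic F n v) {t : ℝ} (ht₀ : 0 ≤ t)
    (ht₁ : t ≤ 1) : IsStochastic F n ((1 - t) • w + t • v) := by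
  refine ⟨fun j e => ?_, fun j hj => ?_⟩
  · have := hw.1 j e
    have := hv.1 j e
    simp only [Pi.add_apply, Pi.smul_apply, smul_eq_mul]
    positivity
  · simp only [Pi.add_apply, Pi.smul_apply, smul_eq_mul, sum_add_distrib, ← mul_sum,
      hw.2 j hj, hv.2 j hj]
    ring

lemma update_single (hw : IsStochastic F n w) {j : ℕ} {x : ℕ × ℕ} (hx : x ∈ F j) :
    IsStochastic F n (update w j (Pi.single x 1)) := by
  refine ⟨fun i e => ?_, fun i hi => ?_⟩
  · by_cases h : i = j
    · subst h
      simpa using (Pi.single_nonneg (α := fun _ : ℕ × ℕ => ℝ)).2 zero_le_one e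
    · simpa [update_of_ne h] using hw.1 i e
  · by_cases h : i = j
    · subst h
      simp [sum_pi_single', hx]
    · simpa [update_of_ne h] using hw.2 i hi

lemma pathSum_le_one (hw : IsStochastic F n w) : pathSum F w n ≤ 1 :=
  calc pathSum F w n
      ≤ ∑ γ ∈ Fintype.piFinset (fun k : Fin n => F k), ∏ k : Fin n, w k (γ k) :=
        sum_le_sum_of_subset_of_nonneg (filter_subset _ _)
          fun _ _ _ => prod_nonneg fun _ _ => hw.1 _ _
    _ = 1 := by rw [← prod_univ_sum]; exact prod_eq_one fun k _ => hw.2 k k.isLt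

lemma exists_unlinked_of_pathSum_lt_one (hw : IsStochastic F n w) (h : pathSum F w n < 1) :
    ∃ k, k + 1 < n ∧ ∃ e ∈ F k, ∃ f ∈ F (k + 1), 0 < w k e ∧ 0 < w (k + 1) f ∧ e.2 ≠ f.1 := by
  have htot : pathSum F w n +
      ∑ γ ∈ (Fintype.piFinset fun k : Fin n => F k).filter (¬ IsPath ·), ∏ k : Fin n, w k (γ k)
        = 1 := by
    rw [pathSum, sum_filter_add_sum_filter_not, ← prod_univ_sum]
    exact prod_eq_one fun k _ => hw.2 k k.isLt
  have hrest : ∑ _γ ∈ (Fintype.piFinset fun k : Fin n => F k).filter (¬ IsPath ·), (0 : ℝ) <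
      ∑ γ ∈ (Fintype.piFinset fun k : Fin n => F k).filter (¬ IsPath ·),
        ∏ k : Fin n, w k (γ k) := by
    rw [sum_const_zero]
    linarith
  obtain ⟨γ, hγ, hprod⟩ := exists_lt_of_sum_lt hrest
  rw [mem_filter, Fintype.mem_piFinset] at hγ
  have hpos : ∀ k : Fin n, 0 < w k (γ k) := fun k =>
    (hw.1 _ _).lt_of_ne' ((prod_ne_zero_iff.1 hprod.ne') k (mem_univ k))
  obtain ⟨k, hk, hne⟩ : ∃ k : Fin n, ∃ hk : k.val + 1 < n, (γ k).2 ≠ (γ ⟨k + 1, hk⟩).1 := by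
    simpa [IsPath] using hγ.2
  exact ⟨k, hk, γ k, hγ.1 k, γ ⟨k + 1, hk⟩, hγ.1 _, hpos k, hpos ⟨k + 1, hk⟩, hne⟩

end IsStochastic

def IsLocalMaxPathSum (F : ℕ → Finset (ℕ × ℕ)) (n : ℕ) (w : ℕ → ℕ × ℕ → ℝ) : Prop :=
  ∃ ε > 0, ∀ w' : ℕ → ℕ × ℕ → ℝ, IsStochastic F n w' →
    (∀ j < n, ∀ e ∈ F j, |w' j e - w j e| < ε) → pathSum F w' n ≤ pathSum F w n

namespace IsLocalMaxPathSum

variable {F : ℕ → Finset (ℕ × ℕ)} {n : ℕ} {w : ℕ → ℕ × ℕ → ℝ}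
  (hmax : IsLocalMaxPathSum F n w) (hw : IsStochastic F n w)
include hmax hw

lemma exists_smul_add_smul_le {v : ℕ → ℕ × ℕ → ℝ} (hv : IsStochastic F n v) :
    ∃ t : ℝ, 0 < t ∧ t ≤ 1 ∧ pathSum F ((1 - t) • w + t • v) n ≤ pathSum F w n := by
  obtain ⟨ε, hε, hloc⟩ := hmax
  set t := min 1 (ε / 2)
  have ht₀ : 0 < t := lt_min one_pos (half_pos hε)
  have ht₁ : t ≤ 1 := min_le_left _ _
  refine ⟨t, ht₀, ht₁, hloc _ (hw.smul_add_smul hv ht₀.le ht₁) fun j hj e he => ?_⟩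
  have hdist : |v j e - w j e| ≤ 1 :=
    abs_sub_le_of_nonneg_of_le (hv.1 j e) (hv.le_one hj he) (hw.1 j e) (hw.le_one hj he)
  calc |((1 - t) • w + t • v) j e - w j e|
      = t * |v j e - w j e| := by
        simp only [Pi.add_apply, Pi.smul_apply, smul_eq_mul]
        rw [← abs_of_pos ht₀, ← abs_mul, abs_of_pos ht₀]
        ring_nf
    _ ≤ t := mul_le_of_le_one_right ht₀.le hdist
    _ < ε := (min_le_right _ _).trans_lt (half_lt_self hε)

lemma pathSum_pos {γ : Fin n → ℕ × ℕ} (hγ : γ ∈ Fintype.piFinset fun k : Fin n => F k)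
    (hpath : IsPath γ) : 0 < pathSum F w n := by
  set v : ℕ → ℕ × ℕ → ℝ := fun j => if h : j < n then Pi.single (γ ⟨j, h⟩) 1 else 0
  have hv : IsStochastic F n v := by
    refine ⟨fun j e => ?_, fun j hj => ?_⟩
    · simp only [v]
      split_ifs
      · exact (Pi.single_nonneg (α := fun _ : ℕ × ℕ => ℝ)).2 zero_le_one e
      · exact le_rfl
    · simp [v, hj, sum_pi_single', Fintype.mem_piFinset.1 hγ ⟨j, hj⟩]
  obtain ⟨t, ht₀, ht₁, hle⟩ := hmax.exists_smul_add_smul_le hw hv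
  refine lt_of_lt_of_le ?_ hle
  refine lt_of_lt_of_le (prod_pos fun k _ => ?_)
    (single_le_sum (fun γ _ => prod_nonneg fun k _ => (hw.smul_add_smul hv ht₀.le ht₁).1 _ _)
      (mem_filter.2 ⟨hγ, hpath⟩))
  have hvk : v k (γ k) = 1 := by simp [v]
  simp only [Pi.add_apply, Pi.smul_apply, smul_eq_mul, hvk]
  nlinarith [hw.1 k (γ k)]

lemma pathSumCoeff_le {j : ℕ} (hj : j < n) {x : ℕ × ℕ} (hx : x ∈ F j) :
    pathSumCoeff F w n j x ≤ pathSum F w n := by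
  obtain ⟨t, ht₀, -, hle⟩ := hmax.exists_smul_add_smul_le hw (hw.update_single hx)
  rw [smul_add_smul_update, Convex.combo_self (sub_add_cancel 1 t),
    pathSum_update_smul_add_smul F w hj, update_eq_self, pathSum_update_single F w hj hx] at hle
  refine le_of_mul_le_mul_left ?_ ht₀
  linarith

lemma pathSumCoeff_eq {j : ℕ} (hj : j < n) {x : ℕ × ℕ} (hx : x ∈ F j) (hpos : 0 < w j x) :
    pathSumCoeff F w n j x = pathSum F w n := by
  have hsum : ∑ y ∈ F j, w j y * (pathSum F w n - pathSumCoeff F w n j y) = 0 := by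
    simp_rw [mul_sub, sum_sub_distrib, ← sum_mul, hw.2 j hj, one_mul,
      ← pathSum_eq_sum_mul_coeff F w hj, sub_self]
  have hterm := (sum_eq_zero_iff_of_nonneg fun y hy =>
    mul_nonneg (hw.1 j y) (sub_nonneg.2 (hmax.pathSumCoeff_le hw hj hy))).1 hsum x hx
  rcases mul_eq_zero.1 hterm with h | h
  · exact absurd h hpos.ne'
  · linarith

lemma pathSum_update_single_update_single_le {k : ℕ} (hk : k + 1 < n) {e g : ℕ × ℕ}
    (he : e ∈ F k) (hg : g ∈ F (k + 1)) (hce : pathSumCoeff F w n k e = pathSum F w n)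
    (hcg : pathSumCoeff F w n (k + 1) g = pathSum F w n) :
    pathSum F (update (update w k (Pi.single e 1)) (k + 1) (Pi.single g 1)) n ≤
      pathSum F w n := by
  have hne : k ≠ k + 1 := by omega
  obtain ⟨t, ht₀, -, hle⟩ :=
    hmax.exists_smul_add_smul_le hw ((hw.update_single he).update_single hg)
  set a := (1 - t) • w k + t • Pi.single e 1
  have hwa : pathSum F (update w k a) n = (1 - t) * pathSum F w n + t * pathSum F w n := by
    rw [pathSum_update_smul_add_smul F w (by omega), update_eq_self,
      pathSum_update_single F w (by omega) he, hce]
  have hga : pathSum F (update (update w (k + 1) (Pi.single g 1)) k a) n =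
      (1 - t) * pathSum F w n +
        t * pathSum F (update (update w k (Pi.single e 1)) (k + 1) (Pi.single g 1)) n := by
    rw [pathSum_update_smul_add_smul _ _ (by omega),
      update_eq_self_iff.2 (update_of_ne hne _ w).symm, pathSum_update_single F w hk hg, hcg,
      update_comm hne.symm]
  rw [smul_add_smul_update, smul_add_smul_update, Convex.combo_self (sub_add_cancel 1 t),
    pathSum_update_smul_add_smul _ _ hk, update_eq_self_iff.2 (update_of_ne hne.symm _ w).symm,
    update_comm hne, hwa, hga] at hle
  refine le_of_mul_le_mul_left ?_ (mul_pos ht₀ ht₀)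
  linarith

lemma snd_eq_fst (hφ : 0 < pathSum F w n) {k : ℕ} (hk : k + 1 < n) {e f : ℕ × ℕ}
    (he : e ∈ F k) (hf : f ∈ F (k + 1)) (hwe : 0 < w k e) (hwf : 0 < w (k + 1) f) :
    e.2 = f.1 := by
  by_contra hef
  have hce : inSum F w k e.1 * outSum F w (k + 1) (n - k - 1) e.2 = pathSum F w n :=
    hmax.pathSumCoeff_eq hw (by omega) he hwe
  have hnode : inSum F w (k + 1) e.2 * outSum F w (k + 1) (n - k - 1) e.2 +
      w (k + 1) f * pathSum F w n ≤ pathSum F w n :=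
    calc _ = ∑ y ∈ insert f ((F (k + 1)).filter (·.1 = e.2)),
            w (k + 1) y * pathSumCoeff F w n (k + 1) y := by
          rw [sum_insert (by simp [Ne.symm hef]), hmax.pathSumCoeff_eq hw hk hf hwf, Nat.sub_sub,
            inSum_mul_outSum_eq_sum_coeff F w hk, add_comm]
      _ ≤ ∑ y ∈ F (k + 1), w (k + 1) y * pathSumCoeff F w n (k + 1) y :=
          sum_le_sum_of_subset_of_nonneg (insert_subset hf (filter_subset _ _))
            fun y _ _ => mul_nonneg (hw.1 _ _) (pathSumCoeff_nonneg hw.1 _ _ _)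
      _ = pathSum F w n := (pathSum_eq_sum_mul_coeff F w hk).symm
  obtain ⟨g, hgmem, hwg⟩ : ∃ g ∈ (F (k + 1)).filter (·.1 = e.2),
      0 < w (k + 1) g * outSum F w (k + 2) (n - k - 2) g.2 := by
    have hout : 0 < outSum F w (k + 1) (n - k - 1) e.2 :=
      pos_of_mul_pos_right (hce ▸ hφ) (inSum_nonneg hw.1 _ _)
    rw [show n - k - 1 = n - k - 2 + 1 by omega, outSum_succ] at hout
    exact exists_lt_of_sum_lt (f := fun _ => 0) (by simpa using hout)
  obtain ⟨hg, hge⟩ := mem_filter.1 hgmem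
  have hcg := hmax.pathSumCoeff_eq hw hk hg (pos_of_mul_pos_left hwg (outSum_nonneg hw.1 _ _ _))
  have hG := hmax.pathSum_update_single_update_single_le hw hk he hg hce hcg
  rw [pathSum_update_single_update_single F w hk he hg hge.symm] at hG
  have hGP : inSum F w k e.1 * outSum F w (k + 2) (n - k - 2) g.2 *
      (inSum F w (k + 1) e.2 * outSum F w (k + 1) (n - k - 1) e.2) =
        pathSum F w n * pathSum F w n :=
    calc _ = inSum F w k e.1 * outSum F w (k + 1) (n - k - 1) e.2 *
          pathSumCoeff F w n (k + 1) g := by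
          rw [pathSumCoeff, hge, show n - (k + 1) - 1 = n - k - 2 by omega]
          ring
      _ = _ := by rw [hce, hcg]
  have hP : 0 ≤ inSum F w (k + 1) e.2 * outSum F w (k + 1) (n - k - 1) e.2 :=
    mul_nonneg (inSum_nonneg hw.1 _ _) (outSum_nonneg hw.1 _ _ _)
  nlinarith [mul_le_mul_of_nonneg_right hG hP, mul_le_mul_of_nonneg_left hnode hφ.le,
    mul_pos hwf (mul_pos hφ hφ)]

lemma pathSum_eq_one {γ : Fin n → ℕ × ℕ} (hγ : γ ∈ Fintype.piFinset fun k : Fin n => F k)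
    (hpath : IsPath γ) : pathSum F w n = 1 := by
  refine hw.pathSum_le_one.antisymm (not_lt.1 fun hlt => ?_)
  obtain ⟨k, hk, e, he, f, hf, hwe, hwf, hef⟩ := hw.exists_unlinked_of_pathSum_lt_one hlt
  exact hef (hmax.snd_eq_fst hw (hmax.pathSum_pos hw hγ hpath) hk he hf hwe hwf)

end IsLocalMaxPathSum

/-- over the product of per-layer probability simplices, every
local maximizer of φ^tot is a global maximizer with value 1 (assuming every
layer contains an edge lying on some complete input-output path). -/
theorem local_max_is_global
    (K : ℕ) (hK : 3 < K) (E : ℕ → Finset (ℕ × ℕ)) (θ : ℕ → ℕ → ℕ → ℝ)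
    (hθ0 : ∀ k i j, 0 ≤ θ k i j)
    (hsum : ∀ k, k < K - 1 → ∑ e ∈ E k, θ k e.1 e.2 = 1)
    (hE : ∀ k (hk : k < K - 1), ∃ e ∈ E k,
      ∃ γ : Fin (K-1) → ℕ × ℕ, (∀ k', γ k' ∈ E k'.val) ∧ Contig K γ ∧ γ ⟨k, hk⟩ = e)
    (hloc : ∃ ε > 0, ∀ θ' : ℕ → ℕ → ℕ → ℝ,
      (∀ k i j, 0 ≤ θ' k i j) →
      (∀ k, k < K - 1 → ∑ e ∈ E k, θ' k e.1 e.2 = 1) →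
      (∀ k, k < K - 1 → ∀ e ∈ E k, |θ' k e.1 e.2 - θ k e.1 e.2| < ε) →
      phiTot K E θ' ≤ phiTot K E θ) :
    phiTot K E θ = 1 := by
  obtain ⟨-, -, γ, hγE, hγ, -⟩ := hE 0 (by omega)
  obtain ⟨ε, hε, hloc⟩ := hloc
  have hw : IsStochastic E (K - 1) fun k e => θ k e.1 e.2 := ⟨fun k e => hθ0 k e.1 e.2, hsum⟩
  have hmax : IsLocalMaxPathSum E (K - 1) fun k e => θ k e.1 e.2 :=
    ⟨ε, hε, fun w' hw' hclose =>
      hloc (fun k i j => w' k (i, j)) (fun k i j => hw'.1 k (i, j)) hw'.2 hclose⟩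
  exact hmax.pathSum_eq_one hw (Fintype.mem_piFinset.2 hγE) hγ
end

section
/- If φ^tot(θ) = 1 and θ is per-layer simplex-normalized, then for every intermediate layer l (1 < l < K), Σ_{r∈V_l} a_{·r} = 1 and for every node r ∈ V_l with a_{·r} > 0 one has a_{r·} = 1 (the forward mass arriving at used nodes is fully propagated to the output). -/
open Finset

/-!
Forgetting contiguity, the weights of all edge sequences through consecutive layers sum to a
product of layer sums, each equal to 1; hence `a_{r·} ≤ 1` and `∑_r a_{·r} ≤ 1`. Cutting every
input-to-output path at its node `r` in layer `l` gives
`φ^tot ≤ ∑_r a_{·r} a_{r·} ≤ ∑_r a_{·r} ≤ 1`, so `φ^tot = 1` forces equality throughout, and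
then `∑_r a_{·r} (1 - a_{r·}) = 0` is a sum of nonnegative terms.
-/

section General

variable {ι α R : Type*}

lemma Finset.sum_filter_piFinset_prod_le [Fintype ι] [DecidableEq ι]
    [CommSemiring R] [PartialOrder R] [IsOrderedRing R]
    (t : ι → Finset α) (p : (ι → α) → Prop) [DecidablePred p] (f : ι → α → R)
    (hf : ∀ i, ∀ a ∈ t i, 0 ≤ f i a) :
    ∑ x ∈ (Fintype.piFinset t).filter p, ∏ i, f i (x i) ≤ ∏ i, ∑ a ∈ t i, f i a := by
  rw [prod_univ_sum]
  refine sum_le_sum_of_subset_of_nonneg (filter_subset _ _) fun x hx _ => ?_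
  exact prod_nonneg fun i _ => hf i _ (Fintype.mem_piFinset.mp hx i)

lemma Finset.eq_one_of_sum_le_sum_mul [Ring R] [LinearOrder R] [IsStrictOrderedRing R]
    {s : Finset ι} {a b : ι → R} (ha : ∀ i ∈ s, 0 ≤ a i) (hb : ∀ i ∈ s, b i ≤ 1)
    (h : ∑ i ∈ s, a i ≤ ∑ i ∈ s, a i * b i) {i : ι} (hi : i ∈ s) (hai : 0 < a i) :
    b i = 1 := by
  have hterm : ∀ j ∈ s, 0 ≤ a j * (1 - b j) := fun j hj =>
    mul_nonneg (ha j hj) (sub_nonneg.mpr (hb j hj))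
  have hzero : ∑ j ∈ s, a j * (1 - b j) = 0 := by
    refine le_antisymm ?_ (sum_nonneg hterm)
    simpa only [mul_sub, mul_one, sum_sub_distrib, sub_nonpos] using h
  have hi_zero := (sum_eq_zero_iff_of_nonneg hterm).mp hzero i hi
  exact (sub_eq_zero.mp ((mul_eq_zero.mp hi_zero).resolve_left hai.ne')).symm

def Fin.dropFirst {m : ℕ} (l : ℕ) (γ : Fin m → α) : Fin (m - l) → α :=
  fun k => γ ⟨l + k, by omega⟩

lemma Fin.prod_univ_eq_prod_take_mul_prod_dropFirst [CommMonoid R] {m l : ℕ} (hl : l ≤ m)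
    (F : Fin m → R) :
    ∏ k, F k = (∏ k, Fin.take l hl F k) * ∏ k, Fin.dropFirst l F k := by
  have h : l + (m - l) = m := by omega
  rw [← Fintype.prod_equiv (finCongr h) (fun k => F (Fin.cast h k)) _ fun k => rfl,
    Fin.prod_univ_add]
  rfl

lemma Fin.take_dropFirst_injective {m l : ℕ} (hl : l ≤ m) :
    Function.Injective fun γ : Fin m → α => (Fin.take l hl γ, Fin.dropFirst l γ) := by
  intro γ γ' he
  obtain ⟨hhead, htail⟩ := Prod.mk.inj he
  funext j
  rcases lt_or_ge j.val l with hj | hj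
  · exact congrFun hhead ⟨j, hj⟩
  · have := congrFun htail ⟨j - l, by omega⟩
    simpa only [Fin.dropFirst, Nat.add_sub_cancel' hj] using this

end General

section LayeredNetwork

variable (K : ℕ) (E : ℕ → Finset (ℕ × ℕ)) (θ : ℕ → ℕ → ℕ → ℝ)

def contigPaths (m : ℕ) : Finset (Fin m → ℕ × ℕ) :=
  (Fintype.piFinset fun k : Fin m => E k).filter
    fun γ => ∀ k : Fin m, ∀ h : k.val + 1 < m, (γ k).2 = (γ ⟨k.val + 1, h⟩).1

def inPaths (l r : ℕ) : Finset (Fin l → ℕ × ℕ) :=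
  (Fintype.piFinset (fun k : Fin l => E k.val)).filter
    (fun γ => (∀ k : Fin l, ∀ h : k.val + 1 < l, (γ k).2 = (γ ⟨k.val + 1, h⟩).1)
      ∧ ∀ h : 0 < l, (γ ⟨l - 1, by omega⟩).2 = r)

def outPaths (l r : ℕ) : Finset (Fin (K - 1 - l) → ℕ × ℕ) :=
  (Fintype.piFinset (fun k : Fin (K - 1 - l) => E (l + k.val))).filter
    (fun γ => (∀ k : Fin (K - 1 - l), ∀ h : k.val + 1 < K - 1 - l,
        (γ k).2 = (γ ⟨k.val + 1, h⟩).1)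
      ∧ ∀ h : 0 < K - 1 - l, (γ ⟨0, h⟩).1 = r)

lemma phiTot_eq_sum_contigPaths :
    phiTot K E θ = ∑ γ ∈ contigPaths E (K - 1), ∏ k : Fin (K - 1), θ k (γ k).1 (γ k).2 :=
  rfl

lemma aIn_eq_sum_inPaths (l r : ℕ) :
    aIn E θ l r = ∑ γ ∈ inPaths E l r, ∏ k : Fin l, θ k (γ k).1 (γ k).2 :=
  rfl

lemma aOut_eq_sum_outPaths (l r : ℕ) :
    aOut K E θ l r = ∑ γ ∈ outPaths K E l r, ∏ k : Fin (K - 1 - l), θ (l + k) (γ k).1 (γ k).2 :=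
  rfl

end LayeredNetwork

section Connectivity

variable {K : ℕ} {n : ℕ → ℕ} {E : ℕ → Finset (ℕ × ℕ)} {θ : ℕ → ℕ → ℕ → ℝ}

lemma aIn_nonneg (hθ0 : ∀ k i j, 0 ≤ θ k i j) (l r : ℕ) : 0 ≤ aIn E θ l r :=
  sum_nonneg fun _ _ => prod_nonneg fun _ _ => hθ0 _ _ _

lemma aOut_le_one (hθ0 : ∀ k i j, 0 ≤ θ k i j)
    (hsum : ∀ k, k < K - 1 → ∑ e ∈ E k, θ k e.1 e.2 = 1) (l r : ℕ) :
    aOut K E θ l r ≤ 1 :=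
  calc aOut K E θ l r ≤ ∏ k : Fin (K - 1 - l), ∑ e ∈ E (l + k), θ (l + k) e.1 e.2 :=
        sum_filter_piFinset_prod_le _ _ (fun (k : Fin (K - 1 - l)) (e : ℕ × ℕ) => θ (l + k) e.1 e.2) fun _ _ _ => hθ0 _ _ _
    _ = 1 := prod_eq_one fun k _ => hsum _ (by omega)

lemma sum_contigPaths_le_one (hθ0 : ∀ k i j, 0 ≤ θ k i j)
    (hsum : ∀ k, k < K - 1 → ∑ e ∈ E k, θ k e.1 e.2 = 1) {m : ℕ} (hm : m ≤ K - 1) :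
    ∑ γ ∈ contigPaths E m, ∏ k : Fin m, θ k (γ k).1 (γ k).2 ≤ 1 :=
  calc _ ≤ ∏ k : Fin m, ∑ e ∈ E k, θ k e.1 e.2 :=
        sum_filter_piFinset_prod_le _ _ (fun (k : Fin m) (e : ℕ × ℕ) => θ k e.1 e.2) fun _ _ _ => hθ0 _ _ _
    _ = 1 := prod_eq_one fun k _ => hsum _ (by omega)

lemma snd_lt_of_mem_contigPaths (hE : ∀ k, ∀ e ∈ E k, e.1 < n k ∧ e.2 < n (k + 1)) {m : ℕ}
    {γ : Fin m → ℕ × ℕ} (hγ : γ ∈ contigPaths E m) (k : Fin m) : (γ k).2 < n (k + 1) :=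
  (hE _ _ (Fintype.mem_piFinset.mp (mem_filter.mp hγ).1 k)).2

lemma inPaths_eq_filter_contigPaths {l : ℕ} (hl0 : 0 < l) (r : ℕ) :
    inPaths E l r = (contigPaths E l).filter fun γ => (γ ⟨l - 1, by omega⟩).2 = r := by
  rw [contigPaths, filter_filter]
  exact filter_congr fun _ _ => and_congr_right' ⟨fun h => h hl0, fun h _ => h⟩

lemma sum_aIn_eq_sum_contigPaths (hE : ∀ k, ∀ e ∈ E k, e.1 < n k ∧ e.2 < n (k + 1))
    {l : ℕ} (hl0 : 0 < l) :
    ∑ r ∈ range (n l), aIn E θ l r = ∑ γ ∈ contigPaths E l, ∏ k : Fin l, θ k (γ k).1 (γ k).2 := by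
  simp_rw [aIn_eq_sum_inPaths, inPaths_eq_filter_contigPaths hl0]
  refine sum_fiberwise_of_maps_to (fun γ hγ => mem_range.mpr ?_) _
  simpa [Nat.sub_add_cancel hl0] using snd_lt_of_mem_contigPaths hE hγ ⟨l - 1, by omega⟩


lemma take_mem_inPaths {l m r : ℕ} (hl0 : 0 < l) (hlm : l ≤ m) {γ : Fin m → ℕ × ℕ}
    (hγ : γ ∈ contigPaths E m) (hr : (γ ⟨l - 1, by omega⟩).2 = r) :
    Fin.take l hlm γ ∈ inPaths E l r := by
  obtain ⟨hpi, hc⟩ := mem_filter.mp hγ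
  refine mem_filter.mpr ⟨Fintype.mem_piFinset.mpr fun k => ?_, fun k hk => ?_, fun _ => hr⟩
  · exact Fintype.mem_piFinset.mp hpi _
  · exact hc (Fin.castLE hlm k) (by simp only [Fin.val_castLE]; omega)

lemma dropFirst_mem_outPaths {l r : ℕ} (hl0 : 0 < l) (hl : l < K - 1)
    {γ : Fin (K - 1) → ℕ × ℕ} (hγ : γ ∈ contigPaths E (K - 1))
    (hr : (γ ⟨l - 1, by omega⟩).2 = r) :
    Fin.dropFirst l γ ∈ outPaths K E l r := by
  obtain ⟨hpi, hc⟩ := mem_filter.mp hγ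
  refine mem_filter.mpr ⟨Fintype.mem_piFinset.mpr fun k => ?_, fun k hk => ?_, fun _ => ?_⟩
  · exact Fintype.mem_piFinset.mp hpi _
  · exact hc ⟨l + k, by omega⟩ (by dsimp only; omega)
  · have hnext := hc ⟨l - 1, by omega⟩ (by dsimp only; omega)
    simp only [Nat.sub_add_cancel hl0] at hnext
    exact hnext ▸ hr

lemma sum_contigPaths_through_le_aIn_mul_aOut (hθ0 : ∀ k i j, 0 ≤ θ k i j) {l : ℕ}
    (hl0 : 0 < l) (hl : l < K - 1) (r : ℕ) :
    ∑ γ ∈ (contigPaths E (K - 1)).filter (fun γ => (γ ⟨l - 1, by omega⟩).2 = r),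
        ∏ k : Fin (K - 1), θ k (γ k).1 (γ k).2
      ≤ aIn E θ l r * aOut K E θ l r := by
  set split := fun γ : Fin (K - 1) → ℕ × ℕ => (Fin.take l hl.le γ, Fin.dropFirst l γ)
  set w := fun p : (Fin l → ℕ × ℕ) × (Fin (K - 1 - l) → ℕ × ℕ) =>
    (∏ k : Fin l, θ k (p.1 k).1 (p.1 k).2) * ∏ k : Fin (K - 1 - l), θ (l + k) (p.2 k).1 (p.2 k).2
  have hsplit : ∀ γ ∈ (contigPaths E (K - 1)).filter (fun γ => (γ ⟨l - 1, by omega⟩).2 = r),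
      split γ ∈ inPaths E l r ×ˢ outPaths K E l r := fun γ hγ =>
    have ⟨hγ, hr⟩ := mem_filter.mp hγ
    mem_product.mpr ⟨take_mem_inPaths hl0 hl.le hγ hr, dropFirst_mem_outPaths hl0 hl hγ hr⟩
  calc _ = ∑ γ ∈ (contigPaths E (K - 1)).filter (fun γ => (γ ⟨l - 1, by omega⟩).2 = r),
        w (split γ) :=
        sum_congr rfl fun γ _ => Fin.prod_univ_eq_prod_take_mul_prod_dropFirst hl.le _
    _ = ∑ p ∈ ((contigPaths E (K - 1)).filter _).image split, w p :=
        (sum_image fun _ _ _ _ h => Fin.take_dropFirst_injective hl.le h).symm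
    _ ≤ ∑ p ∈ inPaths E l r ×ˢ outPaths K E l r, w p :=
        sum_le_sum_of_subset_of_nonneg (image_subset_iff.mpr hsplit) fun _ _ _ =>
          mul_nonneg (prod_nonneg fun _ _ => hθ0 _ _ _) (prod_nonneg fun _ _ => hθ0 _ _ _)
    _ = aIn E θ l r * aOut K E θ l r := by
        rw [sum_product, aIn_eq_sum_inPaths, aOut_eq_sum_outPaths, sum_mul_sum]

lemma phiTot_le_sum_aIn_mul_aOut (hθ0 : ∀ k i j, 0 ≤ θ k i j)
    (hE : ∀ k, ∀ e ∈ E k, e.1 < n k ∧ e.2 < n (k + 1)) {l : ℕ} (hl0 : 0 < l) (hl : l < K - 1) :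
    phiTot K E θ ≤ ∑ r ∈ range (n l), aIn E θ l r * aOut K E θ l r := by
  rw [phiTot_eq_sum_contigPaths, ← sum_fiberwise_of_maps_to
    (g := fun γ : Fin (K - 1) → ℕ × ℕ => (γ ⟨l - 1, by omega⟩).2) (t := range (n l))]
  · exact sum_le_sum fun r _ => sum_contigPaths_through_le_aIn_mul_aOut hθ0 hl0 hl r
  · intro γ hγ
    simpa [Nat.sub_add_cancel hl0] using snd_lt_of_mem_contigPaths hE hγ ⟨l - 1, by omega⟩

end Connectivity

/-- if φ^tot(θ) = 1 (θ per-layer simplex-normalized) then at every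
intermediate layer l, Σ_r a_{·r} = 1 and every used node fully propagates its
mass: a_{·r} > 0 → a_{r·} = 1. -/
theorem phiTot_one_forward_mass
    (K : ℕ) (n : ℕ → ℕ) (E : ℕ → Finset (ℕ × ℕ)) (θ : ℕ → ℕ → ℕ → ℝ)
    (hθ0 : ∀ k i j, 0 ≤ θ k i j)
    (hsum : ∀ k, k < K - 1 → ∑ e ∈ E k, θ k e.1 e.2 = 1)
    (hE : ∀ k, ∀ e ∈ E k, e.1 < n k ∧ e.2 < n (k+1))
    (hφ : phiTot K E θ = 1)
    (l : ℕ) (hl0 : 0 < l) (hl : l < K - 1) :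
    (∑ r ∈ Finset.range (n l), aIn E θ l r = 1) ∧
    ∀ r < n l, 0 < aIn E θ l r → aOut K E θ l r = 1 := by
  have hthrough : 1 ≤ ∑ r ∈ range (n l), aIn E θ l r * aOut K E θ l r :=
    hφ ▸ phiTot_le_sum_aIn_mul_aOut hθ0 hE hl0 hl
  have hforward : ∑ r ∈ range (n l), aIn E θ l r * aOut K E θ l r
      ≤ ∑ r ∈ range (n l), aIn E θ l r :=
    sum_le_sum fun r _ => mul_le_of_le_one_right (aIn_nonneg hθ0 l r) (aOut_le_one hθ0 hsum l r)
  have hmass : ∑ r ∈ range (n l), aIn E θ l r ≤ 1 :=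
    sum_aIn_eq_sum_contigPaths hE hl0 ▸ sum_contigPaths_le_one hθ0 hsum hl.le
  have hmass_eq : ∑ r ∈ range (n l), aIn E θ l r = 1 := by linarith
  refine ⟨hmass_eq, fun r hr hpos => ?_⟩
  exact eq_one_of_sum_le_sum_mul (fun r _ => aIn_nonneg hθ0 l r)
    (fun r _ => aOut_le_one hθ0 hsum l r) (by linarith) (mem_range.mpr hr) hpos
end
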